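/- arXiv:1907.07336 — 2 statements merged into one kernel-verified Lean document; each statement's English description precedes it below -/
import Mathlib

section
/- Let (M, g) be a spacetime of dimension D ≥ 3 satisfying the null energy condition, let S be a timelike photon surface with unit normal n, and let γ be a null geodesic on S whose tangent vector k at p ∈ S points in a principal null direction of the Weyl tensor, i.e. k^b k^c k_{[e} C_{a]bc[d} k_{f]} = 0 at p. Then γ is stable or marginally stable at p: R_{acbd} k^a n^c k^b n^d ≥ 0 at p. -/
set_option autoImplicit false

noncomputable section

/-- An abstract `D`-dimensional spacetime `(M, g)`: a family of tangent spaces over a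
type of points, equipped with a Lorentzian metric, curvature tensors and covariant
derivative operators.  The standard differential-geometric identities relating these
data that are relevant below are recorded as fields, so that the structure is an
axiomatisation of a smooth Lorentzian manifold. -/
structure Spacetime (D : ℕ) where
  /-- the points of the spacetime manifold `M` -/
  Point : Type
  /-- the tangent space at each point -/
  Vec : Point → Type
  [vecGroup : ∀ p : Point, AddCommGroup (Vec p)]
  [vecModule : ∀ p : Point, Module ℝ (Vec p)]
  [vecFin : ∀ p : Point, FiniteDimensional ℝ (Vec p)]
  dim_eq : ∀ p : Point, Module.finrank ℝ (Vec p) = D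
  /-- the metric at each point, as a bilinear form -/
  g : ∀ p : Point, Vec p →ₗ[ℝ] Vec p →ₗ[ℝ] ℝ
  g_symm : ∀ (p : Point) (u v : Vec p), g p u v = g p v u
  g_nondeg : ∀ (p : Point) (u : Vec p), (∀ v : Vec p, g p u v = 0) → u = 0
  /-- Lorentzian signature `(-,+,⋯,+)` -/
  lorentzian : ∀ p : Point, ∃ b : Module.Basis (Fin D) ℝ (Vec p), ∀ i j : Fin D,
    g p (b i) (b j) = if i = j then (if (i : ℕ) = 0 then (-1 : ℝ) else 1) else 0
  /-- `IsVelocity c v` asserts that `v t ∈ T_{c t} M` is the velocity (tangent) field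
  of the smooth curve `c : ℝ → M`. -/
  IsVelocity : (c : ℝ → Point) → (∀ t, Vec (c t)) → Prop
  /-- covariant derivative of a vector field along a curve -/
  covDerivAlong : (c : ℝ → Point) → (∀ t, Vec (c t)) → (∀ t, Vec (c t))
  /-- directional derivative of a scalar field -/
  dirDeriv : (Point → ℝ) → ∀ p : Point, Vec p →ₗ[ℝ] ℝ
  /-- covariant derivative `∇Y` of a vector field, linear in the direction -/
  covDerivVF : (∀ p, Vec p) → ∀ p : Point, Vec p →ₗ[ℝ] Vec p
  /-- covariant derivative `(∇_u T)(·,·)` of a `(0,2)`-tensor field in a direction `u` -/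
  covDeriv2 : (∀ p, Vec p → Vec p → ℝ) → ∀ p : Point, Vec p → (Vec p → Vec p → ℝ)
  dirDeriv_const : ∀ (a : ℝ) (p : Point) (u : Vec p), dirDeriv (fun _ => a) p u = 0
  /-- metric compatibility of the covariant derivative -/
  metric_compat : ∀ (Y Z : ∀ p, Vec p) (p : Point) (u : Vec p),
    dirDeriv (fun q => g q (Y q) (Z q)) p u
      = g p (covDerivVF Y p u) (Z p) + g p (Y p) (covDerivVF Z p u)
  /-- along a curve, `(T(W,W))' = (∇_{ċ} T)(W,W)` whenever `W` is parallel -/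
  covDeriv2_parallel : ∀ (T : ∀ p, Vec p → Vec p → ℝ) (c : ℝ → Point)
    (v : ∀ t, Vec (c t)), IsVelocity c v →
    ∀ (W : ∀ t, Vec (c t)), (∀ t, covDerivAlong c W t = 0) →
    ∀ t : ℝ, HasDerivAt (fun s => T (c s) (W s) (W s)) (covDeriv2 T (c t) (v t) (W t) (W t)) t
  /-- the Riemann curvature tensor, fully covariant:
  `Riemann p x y z w = R_{abcd} x^a y^b z^c w^d` -/
  Riemann : ∀ p : Point, Vec p →ₗ[ℝ] Vec p →ₗ[ℝ] Vec p →ₗ[ℝ] Vec p →ₗ[ℝ] ℝ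
  riemann_antisym₁ : ∀ (p : Point) (x y z w : Vec p), Riemann p x y z w = - Riemann p y x z w
  riemann_antisym₂ : ∀ (p : Point) (x y z w : Vec p), Riemann p x y z w = - Riemann p x y w z
  riemann_pair_symm : ∀ (p : Point) (x y z w : Vec p), Riemann p x y z w = Riemann p z w x y
  /-- the Ricci tensor -/
  Ricci : ∀ p : Point, Vec p →ₗ[ℝ] Vec p →ₗ[ℝ] ℝ
  ricci_symm : ∀ (p : Point) (x y : Vec p), Ricci p x y = Ricci p y x
  /-- the scalar curvature -/
  Scal : Point → ℝ
  /-- the Weyl tensor, fully covariant, with the same index conventions as `Riemann` -/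
  Weyl : ∀ p : Point, Vec p →ₗ[ℝ] Vec p →ₗ[ℝ] Vec p →ₗ[ℝ] Vec p →ₗ[ℝ] ℝ
  weyl_antisym₁ : ∀ (p : Point) (x y z w : Vec p), Weyl p x y z w = - Weyl p y x z w
  weyl_antisym₂ : ∀ (p : Point) (x y z w : Vec p), Weyl p x y z w = - Weyl p x y w z
  weyl_pair_symm : ∀ (p : Point) (x y z w : Vec p), Weyl p x y z w = Weyl p z w x y
  /-- the Weyl tensor is totally trace-free -/
  weyl_traceFree : ∀ (p : Point) (b : Module.Basis (Fin D) ℝ (Vec p)) (s : Fin D → ℝ),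
    (∀ i j : Fin D, g p (b i) (b j) = if i = j then s i else 0) →
    ∀ x y : Vec p, (∑ i : Fin D, s i * Weyl p (b i) x (b i) y) = 0
  /-- the decomposition of the Riemann tensor into its Weyl, Ricci and scalar parts -/
  weyl_decomposition : 3 ≤ D → ∀ (p : Point) (x y z w : Vec p),
    Riemann p x y z w =
      Weyl p x y z w
      + ((D : ℝ) - 2)⁻¹ * (g p x z * Ricci p y w - g p x w * Ricci p y z
          + g p y w * Ricci p x z - g p y z * Ricci p x w)
      - Scal p / (((D : ℝ) - 1) * ((D : ℝ) - 2))
          * (g p x z * g p y w - g p x w * g p y z)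

attribute [instance] Spacetime.vecGroup Spacetime.vecModule Spacetime.vecFin

namespace Spacetime

variable {D : ℕ} (X : Spacetime D)

/-- transport of a tangent vector along an equality of base points -/
def vcast {p q : X.Point} (h : p = q) (v : X.Vec p) : X.Vec q := h ▸ v

/-- an affinely parametrised geodesic, given by a curve together with its velocity field -/
def IsGeodesic (c : ℝ → X.Point) (v : ∀ t, X.Vec (c t)) : Prop :=
  X.IsVelocity c v ∧ ∀ t : ℝ, X.covDerivAlong c v t = 0

/-- a null affinely parametrised geodesic -/
def IsNullGeodesic (c : ℝ → X.Point) (v : ∀ t, X.Vec (c t)) : Prop :=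
  X.IsGeodesic c v ∧ ∀ t : ℝ, X.g (c t) (v t) (v t) = 0

end Spacetime

/-- A hypersurface `S` of an abstract spacetime, given by its carrier set together with
its tangent hyperplanes, a unit normal, and its shape operator (the second fundamental
form with one index raised). -/
structure Hypersurface {D : ℕ} (X : Spacetime D) where
  carrier : Set X.Point
  /-- the tangent hyperplane `T_p S ⊂ T_p M` -/
  tangent : ∀ (p : X.Point), p ∈ carrier → Submodule ℝ (X.Vec p)
  tangent_rank : ∀ (p : X.Point) (hp : p ∈ carrier),
    Module.finrank ℝ (tangent p hp) = D - 1
  /-- the unit normal `n` of `S` -/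
  normal : ∀ (p : X.Point), p ∈ carrier → X.Vec p
  normal_orth : ∀ (p : X.Point) (hp : p ∈ carrier),
    ∀ v ∈ tangent p hp, X.g p (normal p hp) v = 0
  /-- the shape operator `χ^a{}_b` of `S`, extended to all of `T_p M` by `χ(n) = 0` -/
  shape : ∀ (p : X.Point), p ∈ carrier → (X.Vec p →ₗ[ℝ] X.Vec p)
  shape_symm : ∀ (p : X.Point) (hp : p ∈ carrier) (u v : X.Vec p),
    X.g p (shape p hp u) v = X.g p (shape p hp v) u
  shape_normal : ∀ (p : X.Point) (hp : p ∈ carrier), shape p hp (normal p hp) = 0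
  shape_tangent : ∀ (p : X.Point) (hp : p ∈ carrier) (u : X.Vec p),
    shape p hp u ∈ tangent p hp
  /-- Gauss–Weingarten relation: along any curve inside the hypersurface, the second
  fundamental form applied to the velocity is minus the normal component of the
  acceleration, `χ(v,v) = − g(n, ∇_v v)`. -/
  sff_spec : ∀ (c : ℝ → X.Point) (v : ∀ t, X.Vec (c t)), X.IsVelocity c v →
    ∀ (hc : ∀ t, c t ∈ carrier) (t : ℝ),
      X.g (c t) (shape (c t) (hc t) (v t)) (v t)
        = - X.g (c t) (normal (c t) (hc t)) (X.covDerivAlong c v t)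

namespace Hypersurface

variable {D : ℕ} {X : Spacetime D} (S : Hypersurface X)

/-- the (fully covariant) second fundamental form `χ_{ab}` of `S` -/
def sff (p : X.Point) (hp : p ∈ S.carrier) (u v : X.Vec p) : ℝ :=
  X.g p (S.shape p hp u) v

/-- the trace `Θ = h^{ab} χ_{ab} = χ^a{}_a` of the second fundamental form -/
def theta (p : X.Point) (hp : p ∈ S.carrier) : ℝ :=
  LinearMap.trace ℝ (X.Vec p) (S.shape p hp)

/-- the projector `h^a{}_b = δ^a{}_b − n^a n_b` onto `S` (for a unit spacelike normal);
`g(proj ·, ·)` is the induced metric `h_{ab}`. -/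
def proj (p : X.Point) (hp : p ∈ S.carrier) : X.Vec p →ₗ[ℝ] X.Vec p :=
  LinearMap.id - (X.g p (S.normal p hp)).smulRight (S.normal p hp)

/-- the trace-free part `σ_{ab} = χ_{ab} − Θ h_{ab}/(D−1)` of the second
fundamental form of `S` -/
def sigma (p : X.Point) (hp : p ∈ S.carrier) (u v : X.Vec p) : ℝ :=
  X.g p ((S.shape p hp - (S.theta p hp / ((D : ℝ) - 1)) • S.proj p hp) u) v

/-- a timelike hypersurface: the unit normal is spacelike -/
def IsTimelike : Prop :=
  ∀ (p : X.Point) (hp : p ∈ S.carrier), X.g p (S.normal p hp) (S.normal p hp) = 1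

/-- nowhere spacelike: at each point there is a nonzero causal tangent vector -/
def NowhereSpacelike : Prop :=
  ∀ (p : X.Point) (hp : p ∈ S.carrier), ∃ v ∈ S.tangent p hp, v ≠ 0 ∧ X.g p v v ≤ 0

/-- **Photon surface** (Claudel–Virbhadra–Ellis): an immersed nowhere-spacelike
hypersurface `S` such that for every `p ∈ S` and every null `k ∈ T_p S` there is a null
geodesic `γ : (−ε, ε) → M` with `γ(0) = p`, `γ̇(0) = k`, whose image lies in `S`. -/
def IsPhotonSurface : Prop :=
  S.NowhereSpacelike ∧
  ∀ (p : X.Point) (hp : p ∈ S.carrier) (k : X.Vec p),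
    k ∈ S.tangent p hp → X.g p k k = 0 →
    ∃ (c : ℝ → X.Point) (v : ∀ t, X.Vec (c t)) (ε : ℝ),
      0 < ε ∧ X.IsVelocity c v ∧
      (∀ t : ℝ, |t| < ε → X.covDerivAlong c v t = 0) ∧
      (∀ t : ℝ, |t| < ε → X.g (c t) (v t) (v t) = 0) ∧
      (∃ h : c 0 = p, X.vcast h (v 0) = k) ∧
      (∀ t : ℝ, |t| < ε → c t ∈ S.carrier)

end Hypersurface

/-- `k` is a principal null direction of the Weyl tensor at `p`:
`k^b k^c k_{[e} C_{a]bc[d} k_{f]} = 0`. -/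
def Spacetime.IsPrincipalNullAt {D : ℕ} (X : Spacetime D) (p : X.Point)
    (k : X.Vec p) : Prop :=
  ∀ u v x y : X.Vec p,
    (1 / 4 : ℝ) *
      ((X.g p k v * X.Weyl p u k k x - X.g p k u * X.Weyl p v k k x) * X.g p k y
        - (X.g p k v * X.Weyl p u k k y - X.g p k u * X.Weyl p v k k y) * X.g p k x)
      = 0


/-!
For a null `k` and a unit normal `n ⟂ k`, the Ricci and scalar parts of the Weyl
decomposition collapse, leaving `R(k,n,k,n) = C(k,n,k,n) + Ric(k,k)/(D-2)`.
Contracting the principal-null condition with `n` and a vector `w` with `g(k,w) = 1`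
gives `C(k,n,k,n) = 0`, so the null energy condition makes the right-hand side
nonnegative.
-/

namespace Spacetime

variable {D : ℕ} (X : Spacetime D)

lemma exists_g_eq_one {p : X.Point} {k : X.Vec p} (hk : k ≠ 0) :
    ∃ w : X.Vec p, X.g p k w = 1 := by
  obtain ⟨w, hw⟩ : ∃ w, X.g p k w ≠ 0 := by
    by_contra! h
    exact hk (X.g_nondeg p k h)
  exact ⟨(X.g p k w)⁻¹ • w, by simp [inv_mul_cancel₀ hw]⟩

lemma riemann_null_orthogonal (hD : 3 ≤ D) {p : X.Point} {k n : X.Vec p}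
    (hkk : X.g p k k = 0) (hkn : X.g p k n = 0) :
    X.Riemann p k n k n
      = X.Weyl p k n k n + ((D : ℝ) - 2)⁻¹ * X.g p n n * X.Ricci p k k := by
  have hnk : X.g p n k = 0 := by rw [X.g_symm, hkn]
  rw [X.weyl_decomposition hD, hkk, hkn, hnk]
  ring

variable {X}

lemma IsNullGeodesic.g_vcast_self_eq_zero {c : ℝ → X.Point} {v : ∀ t, X.Vec (c t)}
    (hγ : X.IsNullGeodesic c v) {p : X.Point} (h0 : c 0 = p) :
    X.g p (X.vcast h0 (v 0)) (X.vcast h0 (v 0)) = 0 := by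
  subst h0
  exact hγ.2 0

lemma IsPrincipalNullAt.weyl_eq_zero {p : X.Point} {k n : X.Vec p}
    (hPND : X.IsPrincipalNullAt p k) (hk : k ≠ 0) (hkn : X.g p k n = 0) :
    X.Weyl p k n k n = 0 := by
  obtain ⟨w, hkw⟩ := X.exists_g_eq_one hk
  have h := hPND n w n w
  rw [hkw, hkn] at h
  rw [X.weyl_antisym₁]
  linarith

end Spacetime

theorem principal_null_NEC_stable_or_marginal_general {D : ℕ} (hD : 3 ≤ D) (X : Spacetime D)
    (hNEC : ∀ (p : X.Point) (k : X.Vec p), X.g p k k = 0 → 0 ≤ X.Ricci p k k)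
    (S : Hypersurface X) (hTL : S.IsTimelike)
    (p : X.Point) (hp : p ∈ S.carrier)
    -- `γ` : a null geodesic on `S` with tangent `k` at `p`
    (c : ℝ → X.Point) (v : ∀ t, X.Vec (c t)) (hγ : X.IsNullGeodesic c v)
    (h0 : c 0 = p)
    (k : X.Vec p) (hk : X.vcast h0 (v 0) = k) (hkt : k ∈ S.tangent p hp)
    (hk0 : k ≠ 0)
    -- `k` points in a principal null direction of the Weyl tensor at `p`
    (hPND : X.IsPrincipalNullAt p k) :
    0 ≤ X.Riemann p k (S.normal p hp) k (S.normal p hp) := by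
  have hkk : X.g p k k = 0 := hk ▸ hγ.g_vcast_self_eq_zero h0
  have hkn : X.g p k (S.normal p hp) = 0 := by
    rw [X.g_symm]
    exact S.normal_orth p hp k hkt
  have hD2 : (0 : ℝ) < (D : ℝ) - 2 := by
    have : (3 : ℝ) ≤ D := by exact_mod_cast hD
    linarith
  rw [X.riemann_null_orthogonal hD hkk hkn, hPND.weyl_eq_zero hk0 hkn, hTL p hp]
  have := hNEC p k hkk
  positivity

/-- Let `(M,g)` be a spacetime of dimension `D ≥ 3` satisfying the
null energy condition, `S` a timelike photon surface with unit normal `n`, and `γ` a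
null geodesic on `S` whose tangent `k` at `p ∈ S` points in a principal null direction
of the Weyl tensor.  Then `γ` is stable or marginally stable at `p`:
`R_{acbd} k^a n^c k^b n^d ≥ 0` at `p`. -/
theorem principal_null_NEC_stable_or_marginal {D : ℕ} (hD : 3 ≤ D) (X : Spacetime D)
    (hNEC : ∀ (p : X.Point) (k : X.Vec p), X.g p k k = 0 → 0 ≤ X.Ricci p k k)
    (S : Hypersurface X) (hTL : S.IsTimelike) (hPS : S.IsPhotonSurface)
    (p : X.Point) (hp : p ∈ S.carrier)
    -- `γ` : a null geodesic on `S` with tangent `k` at `p`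
    (c : ℝ → X.Point) (v : ∀ t, X.Vec (c t)) (hγ : X.IsNullGeodesic c v)
    (hγS : ∀ t : ℝ, c t ∈ S.carrier) (h0 : c 0 = p)
    (k : X.Vec p) (hk : X.vcast h0 (v 0) = k) (hkt : k ∈ S.tangent p hp)
    (hk0 : k ≠ 0)
    -- `k` points in a principal null direction of the Weyl tensor at `p`
    (hPND : X.IsPrincipalNullAt p k) :
    0 ≤ X.Riemann p k (S.normal p hp) k (S.normal p hp) :=
  principal_null_NEC_stable_or_marginal_general hD X hNEC S hTL p hp c v hγ h0 k hk hkt hk0 hPND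
end
end

section
/- Let (M, g) be the D-dimensional static metric ds² = −f(r) dt² + g(r) dr² + r² (dχ² + s²(χ) dΩ²_{D−3}) with f > 0, g > 0 and s(χ) = sin χ, χ, or sinh χ, and suppose the constant-radius hypersurface S_{r_c} is a photon surface, i.e. (f r^{−2})′ = 0 at r = r_c. Then, with the foliation by constant-r hypersurfaces (which is a Gaussian normal foliation adapted to S_{r_c} up to reparametrization of r) and unit normal n, the normal derivative of the trace-free second fundamental form on S_{r_c} in the orthonormal tetrad satisfies ∇_n σ_{(μ)(ν)} = −(1/(2(D−1))) ((f r^{−2})″/(f r^{−2})) g^{−1} M_{(μ)(ν)}, where M_{(μ)(ν)} = diag[D−2, 0, 1, ..., 1]. Consequently, since k^{(μ)} k^{(ν)} M_{(μ)(ν)} > 0 for every null k tangent to S_{r_c}, the photon surface S_{r_c} is stable, unstable, or marginally stable if and only if (f r^{−2})″ > 0, < 0, or = 0 at r = r_c respectively. -/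
set_option autoImplicit false
noncomputable section

/-- Diagonal components `g_{μμ}` of the `D`-dimensional static metric
`ds² = −f(r) dt² + g(r) dr² + r² (dχ² + s²(χ) dΩ²_{D−3})`
in the coordinates `(x 0, x 1, x 2, x 3, …) = (t, r, χ, θ₁, …, θ_{D−3})`,
where `dΩ²_{D−3}` is the round metric of the unit `(D−3)`-sphere. -/
def metricComp (f gg s : ℝ → ℝ) (μ : ℕ) (x : ℕ → ℝ) : ℝ :=
  if μ = 0 then - f (x 1)
  else if μ = 1 then gg (x 1)
  else if μ = 2 then (x 1) ^ 2
  else (x 1) ^ 2 * (s (x 2)) ^ 2 * ∏ j ∈ Finset.Ico 3 μ, (Real.sin (x j)) ^ 2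

/-- components of the induced (tetrad) Minkowski metric `h_{(μ)(ν)}` tangent to a
constant-radius hypersurface; the normal direction `μ = 1` is excluded -/
def etaTangent (μ ν : ℕ) : ℝ :=
  if μ = ν then (if μ = 0 then (-1 : ℝ) else if μ = 1 then 0 else 1) else 0

/-- Components `χ_{(μ)(ν)}` of the second fundamental form of the constant-radius
hypersurface `S_r` with unit normal `n = √g dr`, in the orthonormal tetrad
`e_{(μ)} ∝ ∂_μ`: the diagonal formula
`χ_{(μ)(μ)} = ∂_r g_{μμ} / (2 √(g_{rr}) |g_{μμ}|)` (off-diagonal components vanish). -/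
def chiTetrad (f gg s : ℝ → ℝ) (μ : ℕ) (x : ℕ → ℝ) : ℝ :=
  if μ = 1 then 0
  else (2 * Real.sqrt (gg (x 1)))⁻¹ *
    deriv (fun r => metricComp f gg s μ (Function.update x 1 r)) (x 1)
      / |metricComp f gg s μ x|

/-- the trace `Θ = h^{(μ)(ν)} χ_{(μ)(ν)}` of the second fundamental form of `S_r` -/
def thetaTetrad (D : ℕ) (f gg s : ℝ → ℝ) (x : ℕ → ℝ) : ℝ :=
  ∑ μ ∈ Finset.range D, etaTangent μ μ * chiTetrad f gg s μ x

/-- the trace-free part `σ_{(μ)(ν)} = χ_{(μ)(ν)} − Θ h_{(μ)(ν)}/(D−1)` of the second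
fundamental form of `S_r`, in the orthonormal tetrad -/
def sigmaTetrad (D : ℕ) (f gg s : ℝ → ℝ) (μ ν : ℕ) (x : ℕ → ℝ) : ℝ :=
  (if μ = ν then chiTetrad f gg s μ x else 0)
    - thetaTetrad D f gg s x / ((D : ℝ) - 1) * etaTangent μ ν

/-- the matrix `M_{(μ)(ν)} = diag[D−2, 0, 1, …, 1]` -/
def Mdiag (D : ℕ) (μ ν : ℕ) : ℝ :=
  if μ = ν then (if μ = 0 then (D : ℝ) - 2 else if μ = 1 then 0 else 1) else 0

/-- a point in the coordinate domain, off the symmetry axis -/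
def RegularPoint (D : ℕ) (s : ℝ → ℝ) (x : ℕ → ℝ) : Prop :=
  0 < x 1 ∧ s (x 2) ≠ 0 ∧ ∀ j : ℕ, 3 ≤ j → j < D → Real.sin (x j) ≠ 0

/-- tetrad components of `∇_n σ` for the foliation by constant-radius hypersurfaces
(a Gaussian normal foliation up to reparametrisation of `r`), with unit normal
`n = g^{−1/2} ∂_r` -/
def nablaNSigmaTetrad (D : ℕ) (f gg s : ℝ → ℝ) (μ ν : ℕ) (x : ℕ → ℝ) : ℝ :=
  (Real.sqrt (gg (x 1)))⁻¹ *
    deriv (fun r => sigmaTetrad D f gg s μ ν (Function.update x 1 r)) (x 1)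

/-- tetrad components of a nonzero null vector `k` tangent to the constant-radius
hypersurface -/
def NullTangentTetrad (D : ℕ) (k : ℕ → ℝ) : Prop :=
  (∃ μ < D, k μ ≠ 0) ∧ k 1 = 0 ∧ (∀ μ : ℕ, D ≤ μ → k μ = 0) ∧
  (∑ μ ∈ (Finset.range D).erase 0, (k μ) ^ 2) = (k 0) ^ 2

/-!
Along the radial curve `r ↦ x[1 ↦ r]` the tetrad components of the second fundamental form of
`S_r` are `(2√g)⁻¹ · (-f'/f, 0, 2/r, …, 2/r)`, so its trace-free part is
`σ = -(D-1)⁻¹ (2√g)⁻¹ (log F)' M` with `F = f r⁻²`. At a photon surface `(log F)' = F'/F`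
vanishes, so the normal derivative of `σ` only differentiates the logarithmic derivative and
picks up `F''/F`. Contracting `M` with a null tangent `k` gives `(D-1) (k⁰)² > 0`, so the sign of
`k k ∇ₙσ` is the sign of `-F''`.
-/

open Function

section RadialCurve

variable {f gg s : ℝ → ℝ} {x : ℕ → ℝ} {D : ℕ}

lemma metricComp_zero_update (r : ℝ) : metricComp f gg s 0 (update x 1 r) = -f r := by
  simp [metricComp]

lemma metricComp_update_of_two_le {μ : ℕ} (hμ : 2 ≤ μ) (r : ℝ) :
    metricComp f gg s μ (update x 1 r) = r ^ 2 * metricComp f gg s μ (update x 1 1) := by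
  obtain rfl | hμ3 := eq_or_lt_of_le hμ
  · simp [metricComp]
  have hprod : ∀ t : ℝ, ∏ j ∈ Finset.Ico 3 μ, Real.sin (update x 1 t j) ^ 2
      = ∏ j ∈ Finset.Ico 3 μ, Real.sin (x j) ^ 2 :=
    fun t => Finset.prod_congr rfl fun j hj => by
      rw [update_of_ne (by simp at hj; omega)]
  simp only [metricComp, if_neg (show μ ≠ 0 by omega), if_neg (show μ ≠ 1 by omega),
    if_neg (show μ ≠ 2 by omega), hprod, update_self, update_of_ne (show (2 : ℕ) ≠ 1 by simp)]
  ring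

lemma RegularPoint.metricComp_update_pos {μ : ℕ} (hx : RegularPoint D s x) (hμ : 2 ≤ μ)
    (hμD : μ < D) : 0 < metricComp f gg s μ (update x 1 1) := by
  obtain rfl | hμ3 := eq_or_lt_of_le hμ
  · simp [metricComp]
  simp only [metricComp, if_neg (show μ ≠ 0 by omega), if_neg (show μ ≠ 1 by omega),
    if_neg (show μ ≠ 2 by omega), update_self, update_of_ne (show (2 : ℕ) ≠ 1 by simp)]
  refine mul_pos (by simpa using pow_two_pos_of_ne_zero hx.2.1) (Finset.prod_pos fun j hj => ?_)
  simp only [Finset.mem_Ico] at hj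
  rw [update_of_ne (by omega)]
  exact pow_two_pos_of_ne_zero (hx.2.2 j hj.1 (by omega))

lemma chiTetrad_zero_update {r : ℝ} (hr : 0 < f r) :
    chiTetrad f gg s 0 (update x 1 r) = -((2 * √(gg r))⁻¹ * (deriv f r / f r)) := by
  simp only [chiTetrad, update_idem, update_self, metricComp_zero_update, deriv.fun_neg,
    abs_neg, abs_of_pos hr, if_neg zero_ne_one]
  ring

lemma chiTetrad_update_of_two_le {μ : ℕ} (hμ : 2 ≤ μ)
    (hc : 0 < metricComp f gg s μ (update x 1 1)) {r : ℝ} (hr : r ≠ 0) :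
    chiTetrad f gg s μ (update x 1 r) = (2 * √(gg r))⁻¹ * (2 / r) := by
  have hradial : (fun t => metricComp f gg s μ (update x 1 t))
      = fun t => t ^ 2 * metricComp f gg s μ (update x 1 1) :=
    funext (metricComp_update_of_two_le hμ)
  simp only [chiTetrad, if_neg (show μ ≠ 1 by omega), update_idem, update_self, hradial,
    deriv_mul_const_field', deriv_pow_field]
  rw [metricComp_update_of_two_le hμ r, abs_mul, abs_sq, abs_of_pos hc]
  field_simp
  ring

lemma thetaTetrad_update (hD : 2 ≤ D) (hx : RegularPoint D s x) {r : ℝ} (hr : r ≠ 0)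
    (hfr : 0 < f r) :
    thetaTetrad D f gg s (update x 1 r)
      = (2 * √(gg r))⁻¹ * (deriv f r / f r + ((D : ℝ) - 2) * (2 / r)) := by
  have hangular : ∀ μ ∈ Finset.Ico 2 D,
      etaTangent μ μ * chiTetrad f gg s μ (update x 1 r) = (2 * √(gg r))⁻¹ * (2 / r) := by
    intro μ hμ
    rw [Finset.mem_Ico] at hμ
    rw [chiTetrad_update_of_two_le hμ.1 (hx.metricComp_update_pos hμ.1 hμ.2) hr]
    simp [etaTangent, show μ ≠ 0 by omega, show μ ≠ 1 by omega]
  rw [thetaTetrad, Finset.range_eq_Ico, ← Finset.sum_Ico_consecutive _ (Nat.zero_le 2) hD,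
    Finset.sum_congr rfl hangular, Finset.sum_const, Nat.card_Ico, nsmul_eq_mul,
    Nat.cast_sub hD, ← Finset.range_eq_Ico, Finset.sum_range_succ, Finset.sum_range_one,
    chiTetrad_zero_update hfr]
  simp [etaTangent, chiTetrad]
  ring

lemma sigmaTetrad_update (hD : 2 ≤ D) (hx : RegularPoint D s x) {μ : ℕ} (hμ : μ < D) (ν : ℕ)
    {r : ℝ} (hr : r ≠ 0) (hfr : 0 < f r) :
    sigmaTetrad D f gg s μ ν (update x 1 r)
      = ((D : ℝ) - 1)⁻¹ * (2 * √(gg r))⁻¹ * (2 / r - deriv f r / f r) * Mdiag D μ ν := by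
  have hD1 : (D : ℝ) - 1 ≠ 0 := by
    have : (2 : ℝ) ≤ D := by exact_mod_cast hD
    linarith
  rw [sigmaTetrad, thetaTetrad_update hD hx hr hfr]
  by_cases hμν : μ = ν
  · subst hμν
    rcases (show μ = 0 ∨ μ = 1 ∨ 2 ≤ μ by omega) with rfl | rfl | h2
    · simp only [chiTetrad_zero_update hfr, etaTangent, Mdiag, if_true]
      field_simp
      ring
    · simp [chiTetrad, etaTangent, Mdiag]
    · simp only [chiTetrad_update_of_two_le h2 (hx.metricComp_update_pos h2 hμ) hr, etaTangent,
        Mdiag, if_true, if_neg (show μ ≠ 0 by omega), if_neg (show μ ≠ 1 by omega)]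
      field_simp
      ring
  · simp [hμν, etaTangent, Mdiag]

end RadialCurve

section LogDeriv

variable {𝕜 : Type*} [NontriviallyNormedField 𝕜]

lemma logDeriv_div_sq {f : 𝕜 → 𝕜} {r : 𝕜} (hf : DifferentiableAt 𝕜 f r) (hfr : f r ≠ 0)
    (hr : r ≠ 0) : logDeriv (fun t => f t / t ^ 2) r = logDeriv f r - 2 / r := by
  have hpow : logDeriv (fun t : 𝕜 => t ^ 2) r = 2 / r := by simp
  exact (logDeriv_div r hfr (pow_ne_zero 2 hr) hf (differentiableAt_pow 2)).trans
    (congrArg (logDeriv f r - ·) hpow)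

lemma hasDerivAt_logDeriv_of_hasDerivAt_zero {F : 𝕜 → 𝕜} {a b : 𝕜} (hF : HasDerivAt F 0 a)
    (hF' : HasDerivAt (deriv F) b a) (ha : F a ≠ 0) : HasDerivAt (logDeriv F) (b / F a) a := by
  have h := hF'.div hF ha
  rw [hF.deriv, mul_zero, sub_zero, pow_two, mul_div_mul_right _ _ ha] at h
  exact h

end LogDeriv

open Filter Topology in
theorem nablaNSigmaTetrad_eq_of_photonSurface {f gg s : ℝ → ℝ} {x : ℕ → ℝ} {D : ℕ} (hD : 2 ≤ D)
    (hf : ∀ r > 0, 0 < f r) (hfC : ContDiff ℝ 2 f) (hgg : 0 < gg (x 1))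
    (hggd : DifferentiableAt ℝ gg (x 1)) (hx : RegularPoint D s x)
    (hps : deriv (fun r => f r / r ^ 2) (x 1) = 0) {μ : ℕ} (hμ : μ < D) (ν : ℕ) :
    nablaNSigmaTetrad D f gg s μ ν x
      = -(2 * ((D : ℝ) - 1))⁻¹
          * (deriv (deriv (fun r => f r / r ^ 2)) (x 1) / (f (x 1) / x 1 ^ 2))
          * (gg (x 1))⁻¹ * Mdiag D μ ν := by
  set F : ℝ → ℝ := fun r => f r / r ^ 2
  have hr : 0 < x 1 := hx.1
  have hFC : ContDiffAt ℝ 2 F (x 1) :=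
    hfC.contDiffAt.div (contDiffAt_id.pow 2) (by positivity)
  have hF : HasDerivAt F 0 (x 1) := hps ▸ (hFC.differentiableAt (by norm_num)).hasDerivAt
  have hF' : HasDerivAt (deriv F) (deriv (deriv F) (x 1)) (x 1) :=
    ((hFC.derivWithin (m := 1) (by norm_num)).differentiableAt (by norm_num)).hasDerivAt
  have hFpos : 0 < F (x 1) := div_pos (hf _ hr) (by positivity)
  have hlog := hasDerivAt_logDeriv_of_hasDerivAt_zero hF hF' hFpos.ne'
  have hsqrt : DifferentiableAt ℝ (fun r => (2 * √(gg r))⁻¹) (x 1) :=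
    ((hggd.sqrt hgg.ne').const_mul 2).inv (by positivity)
  have hprofile : (fun r => sigmaTetrad D f gg s μ ν (update x 1 r)) =ᶠ[𝓝 (x 1)]
      fun r => -(((D : ℝ) - 1)⁻¹ * (2 * √(gg r))⁻¹ * logDeriv F r * Mdiag D μ ν) := by
    filter_upwards [Ioi_mem_nhds hr] with r hr
    rw [sigmaTetrad_update hD hx hμ ν hr.ne' (hf r hr),
      logDeriv_div_sq ((hfC.differentiable (by norm_num)) r) (hf r hr).ne' hr.ne', logDeriv_apply]
    ring
  have hderiv : HasDerivAt
      (fun r => -(((D : ℝ) - 1)⁻¹ * (2 * √(gg r))⁻¹ * logDeriv F r * Mdiag D μ ν)) _ (x 1) :=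
    (((hsqrt.hasDerivAt.const_mul (((D : ℝ) - 1)⁻¹)).mul hlog).mul_const
      (Mdiag D μ ν)).neg
  have hD1 : (D : ℝ) - 1 ≠ 0 := by
    have : (2 : ℝ) ≤ D := by exact_mod_cast hD
    linarith
  have hsqrt_pos : 0 < √(gg (x 1)) := Real.sqrt_pos.mpr hgg
  rw [nablaNSigmaTetrad, hprofile.deriv_eq, hderiv.deriv, logDeriv_apply, hF.deriv]
  simp only [F]
  field_simp
  rw [Real.sq_sqrt hgg.le]
  ring

namespace NullTangentTetrad

variable {D : ℕ} {k : ℕ → ℝ}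

lemma sum_sum_mul_Mdiag (hk : NullTangentTetrad D k) :
    ∑ μ ∈ Finset.range D, ∑ ν ∈ Finset.range D, k μ * k ν * Mdiag D μ ν
      = ((D : ℝ) - 1) * k 0 ^ 2 := by
  obtain ⟨⟨μ₀, hμ₀, -⟩, hk1, -, hnull⟩ := hk
  have hdiag : ∀ μ ∈ Finset.range D,
      ∑ ν ∈ Finset.range D, k μ * k ν * Mdiag D μ ν = k μ * k μ * Mdiag D μ μ := by
    intro μ hμ
    simp [Mdiag, hμ]
  have hspatial : ∀ μ ∈ (Finset.range D).erase 0, k μ * k μ * Mdiag D μ μ = k μ ^ 2 := by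
    intro μ hμ
    obtain rfl | hμ1 := eq_or_ne μ 1
    · simp [hk1]
    · simp [Mdiag, (Finset.mem_erase.mp hμ).1, hμ1, sq]
  have h0 : 0 ∈ Finset.range D := Finset.mem_range.mpr (by omega)
  rw [Finset.sum_congr rfl hdiag, ← Finset.add_sum_erase _ _ h0, Finset.sum_congr rfl hspatial,
    hnull]
  simp only [Mdiag, if_true]
  ring

lemma apply_zero_ne_zero (hk : NullTangentTetrad D k) : k 0 ≠ 0 := by
  obtain ⟨⟨μ, hμ, hkμ⟩, -, -, hnull⟩ := hk
  intro h0
  rw [h0, zero_pow two_ne_zero,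
    Finset.sum_eq_zero_iff_of_nonneg fun i _ => sq_nonneg (k i)] at hnull
  obtain rfl | hμ0 := eq_or_ne μ 0
  · exact hkμ h0
  · exact hkμ (pow_eq_zero_iff two_ne_zero |>.mp
      (hnull μ (Finset.mem_erase.mpr ⟨hμ0, Finset.mem_range.mpr hμ⟩)))

lemma sum_sum_mul_Mdiag_pos (hD : 2 ≤ D) (hk : NullTangentTetrad D k) :
    0 < ∑ μ ∈ Finset.range D, ∑ ν ∈ Finset.range D, k μ * k ν * Mdiag D μ ν := by
  have hD1 : (1 : ℝ) < D := by exact_mod_cast hD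
  rw [hk.sum_sum_mul_Mdiag]
  exact mul_pos (by linarith) (pow_two_pos_of_ne_zero hk.apply_zero_ne_zero)

end NullTangentTetrad

lemma exists_nullTangentTetrad {D : ℕ} (hD : 3 ≤ D) : ∃ k, NullTangentTetrad D k := by
  refine ⟨fun μ => if μ = 0 ∨ μ = 2 then 1 else 0,
    ⟨0, by omega, by simp⟩, by simp, fun μ hμ => by simp; omega, ?_⟩
  rw [Finset.sum_eq_single_of_mem 2 (by simp; omega)]
  · simp
  · intro μ hμ hμ2
    simp [(Finset.mem_erase.mp hμ).1, hμ2]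

section SignOfScaledPositive

variable {ι : Type*} {P : ι → Prop} {w : ι → ℝ} {a : ℝ}

lemma forall_mul_neg_iff (hP : ∃ i, P i) (hw : ∀ i, P i → 0 < w i) :
    (∀ i, P i → a * w i < 0) ↔ a < 0 := by
  refine ⟨fun h => ?_, fun ha i hi => mul_neg_of_neg_of_pos ha (hw i hi)⟩
  obtain ⟨i, hi⟩ := hP
  exact neg_of_mul_neg_left (h i hi) (hw i hi).le

lemma forall_mul_pos_iff (hP : ∃ i, P i) (hw : ∀ i, P i → 0 < w i) :
    (∀ i, P i → 0 < a * w i) ↔ 0 < a := by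
  refine ⟨fun h => ?_, fun ha i hi => mul_pos ha (hw i hi)⟩
  obtain ⟨i, hi⟩ := hP
  exact pos_of_mul_pos_left (h i hi) (hw i hi).le

lemma forall_mul_eq_zero_iff (hP : ∃ i, P i) (hw : ∀ i, P i → 0 < w i) :
    (∀ i, P i → a * w i = 0) ↔ a = 0 := by
  refine ⟨fun h => ?_, fun ha i _ => by rw [ha, zero_mul]⟩
  obtain ⟨i, hi⟩ := hP
  exact (mul_eq_zero.mp (h i hi)).resolve_right (hw i hi).ne'

end SignOfScaledPositive

theorem stability_of_constant_radius_photon_surface_general {D : ℕ} (hD : 3 ≤ D)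
    (f gg s : ℝ → ℝ)
    (hf : ∀ r > 0, 0 < f r) (hgg : ∀ r > 0, 0 < gg r)
    (hfC : ContDiff ℝ 2 f) (hggC : ContDiff ℝ 1 gg)
    (x : ℕ → ℝ) (hx : RegularPoint D s x)
    -- `S_{r_c}` (with `r_c = x 1`) is a photon surface
    (hps : deriv (fun r => f r / r ^ 2) (x 1) = 0) :
    (∀ μ < D, ∀ ν < D,
      nablaNSigmaTetrad D f gg s μ ν x
        = - (2 * ((D : ℝ) - 1))⁻¹
            * (deriv (deriv (fun r => f r / r ^ 2)) (x 1) / (f (x 1) / (x 1) ^ 2))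
            * (gg (x 1))⁻¹ * Mdiag D μ ν)
    ∧ (∀ k : ℕ → ℝ, NullTangentTetrad D k →
        0 < ∑ μ ∈ Finset.range D, ∑ ν ∈ Finset.range D, k μ * k ν * Mdiag D μ ν)
    ∧ ((∀ k : ℕ → ℝ, NullTangentTetrad D k →
        ∑ μ ∈ Finset.range D, ∑ ν ∈ Finset.range D,
          k μ * k ν * nablaNSigmaTetrad D f gg s μ ν x < 0)
        ↔ 0 < deriv (deriv (fun r => f r / r ^ 2)) (x 1))
    ∧ ((∀ k : ℕ → ℝ, NullTangentTetrad D k →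
        0 < ∑ μ ∈ Finset.range D, ∑ ν ∈ Finset.range D,
          k μ * k ν * nablaNSigmaTetrad D f gg s μ ν x)
        ↔ deriv (deriv (fun r => f r / r ^ 2)) (x 1) < 0)
    ∧ ((∀ k : ℕ → ℝ, NullTangentTetrad D k →
        ∑ μ ∈ Finset.range D, ∑ ν ∈ Finset.range D,
          k μ * k ν * nablaNSigmaTetrad D f gg s μ ν x = 0)
        ↔ deriv (deriv (fun r => f r / r ^ 2)) (x 1) = 0) := by
  have hr : 0 < x 1 := hx.1
  set T := deriv (deriv (fun r => f r / r ^ 2)) (x 1)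
  set K := (2 * ((D : ℝ) - 1))⁻¹ / (f (x 1) / x 1 ^ 2) * (gg (x 1))⁻¹
  have hK : 0 < K := by
    have hD1 : (1 : ℝ) < D := by exact_mod_cast (by omega : 1 < D)
    exact mul_pos (div_pos (inv_pos.mpr (by linarith)) (div_pos (hf _ hr) (by positivity)))
      (inv_pos.mpr (hgg _ hr))
  have hnabla : ∀ μ < D, ∀ ν < D, nablaNSigmaTetrad D f gg s μ ν x
      = -(2 * ((D : ℝ) - 1))⁻¹ * (T / (f (x 1) / x 1 ^ 2)) * (gg (x 1))⁻¹ * Mdiag D μ ν :=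
    fun μ hμ ν _ => nablaNSigmaTetrad_eq_of_photonSurface (by omega) hf hfC (hgg _ hr)
      (hggC.differentiable one_ne_zero _) hx hps hμ ν
  have hcontract : ∀ k : ℕ → ℝ,
      ∑ μ ∈ Finset.range D, ∑ ν ∈ Finset.range D, k μ * k ν * nablaNSigmaTetrad D f gg s μ ν x
        = -(K * T) * ∑ μ ∈ Finset.range D, ∑ ν ∈ Finset.range D, k μ * k ν * Mdiag D μ ν := by
    intro k
    simp_rw [Finset.mul_sum]
    refine Finset.sum_congr rfl fun μ hμ => Finset.sum_congr rfl fun ν hν => ?_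
    rw [hnabla μ (Finset.mem_range.mp hμ) ν (Finset.mem_range.mp hν)]
    ring
  have hquad : ∀ k, NullTangentTetrad D k →
      0 < ∑ μ ∈ Finset.range D, ∑ ν ∈ Finset.range D, k μ * k ν * Mdiag D μ ν :=
    fun k hk => hk.sum_sum_mul_Mdiag_pos (by omega)
  have hex := exists_nullTangentTetrad hD
  simp only [hcontract]
  rw [forall_mul_neg_iff hex hquad, forall_mul_pos_iff hex hquad,
    forall_mul_eq_zero_iff hex hquad, neg_lt_zero, neg_pos, neg_eq_zero,
    mul_pos_iff_of_pos_left hK, mul_eq_zero_iff_left hK.ne']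
  exact ⟨hnabla, hquad, Iff.rfl,
    ⟨fun h => neg_of_mul_neg_right h hK.le, mul_neg_of_pos_of_neg hK⟩, Iff.rfl⟩

/-- For the `D`-dimensional static metric
`ds² = −f dt² + g dr² + r²(dχ² + s²(χ) dΩ²_{D−3})`, suppose the constant-radius
hypersurface `S_{r_c}` is a photon surface, i.e. `(f r⁻²)′ = 0` at `r = r_c`.  Then,
with the foliation by constant-`r` hypersurfaces and unit normal `n`, on `S_{r_c}`
`∇_n σ_{(μ)(ν)} = −(1/(2(D−1))) ((f r⁻²)″/(f r⁻²)) g⁻¹ M_{(μ)(ν)}`,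
`M = diag[D−2, 0, 1, …, 1]`.  Consequently, since `k^{(μ)} k^{(ν)} M_{(μ)(ν)} > 0` for
every null `k` tangent to `S_{r_c}`, the photon surface `S_{r_c}` is stable, unstable,
or marginally stable (i.e. `k^a k^b ∇_n σ_{ab} < 0`, `> 0`, `= 0` for all such `k`)
iff `(f r⁻²)″ > 0`, `< 0`, or `= 0` at `r = r_c` respectively. -/
theorem stability_of_constant_radius_photon_surface {D : ℕ} (hD : 3 ≤ D)
    (f gg s : ℝ → ℝ)
    (hs : s = Real.sin ∨ s = (fun χ => χ) ∨ s = Real.sinh)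
    (hf : ∀ r > 0, 0 < f r) (hgg : ∀ r > 0, 0 < gg r)
    (hfC : ContDiff ℝ 2 f) (hggC : ContDiff ℝ 1 gg)
    (x : ℕ → ℝ) (hx : RegularPoint D s x)
    -- `S_{r_c}` (with `r_c = x 1`) is a photon surface
    (hps : deriv (fun r => f r / r ^ 2) (x 1) = 0) :
    (∀ μ < D, ∀ ν < D,
      nablaNSigmaTetrad D f gg s μ ν x
        = - (2 * ((D : ℝ) - 1))⁻¹
            * (deriv (deriv (fun r => f r / r ^ 2)) (x 1) / (f (x 1) / (x 1) ^ 2))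
            * (gg (x 1))⁻¹ * Mdiag D μ ν)
    ∧ (∀ k : ℕ → ℝ, NullTangentTetrad D k →
        0 < ∑ μ ∈ Finset.range D, ∑ ν ∈ Finset.range D, k μ * k ν * Mdiag D μ ν)
    ∧ ((∀ k : ℕ → ℝ, NullTangentTetrad D k →
        ∑ μ ∈ Finset.range D, ∑ ν ∈ Finset.range D,
          k μ * k ν * nablaNSigmaTetrad D f gg s μ ν x < 0)
        ↔ 0 < deriv (deriv (fun r => f r / r ^ 2)) (x 1))
    ∧ ((∀ k : ℕ → ℝ, NullTangentTetrad D k →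
        0 < ∑ μ ∈ Finset.range D, ∑ ν ∈ Finset.range D,
          k μ * k ν * nablaNSigmaTetrad D f gg s μ ν x)
        ↔ deriv (deriv (fun r => f r / r ^ 2)) (x 1) < 0)
    ∧ ((∀ k : ℕ → ℝ, NullTangentTetrad D k →
        ∑ μ ∈ Finset.range D, ∑ ν ∈ Finset.range D,
          k μ * k ν * nablaNSigmaTetrad D f gg s μ ν x = 0)
        ↔ deriv (deriv (fun r => f r / r ^ 2)) (x 1) = 0) :=
  stability_of_constant_radius_photon_surface_general hD f gg s hf hgg hfC hggC x hx hps
end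
end
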